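/- Let P be a double histogram, let s be a vertex of P, and let k ≥ 0. Then I^k(s) ⊆ I(bd^k(s)) ∩ I(td^k(s)). -/

import Mathlib

open Classical Set

noncomputable section

/-- A *double histogram*: an `x`-monotone orthogonal polygon in general position whose
base line lies on the `x`-axis.  It is described by its bottom columns (over the
breakpoints `xs` with depths `d < 0`) and its top columns (over the breakpoints `ys`
with heights `h > 0`).  A *simple histogram* is the special case `n = 1`, where the
upper boundary is the single (base) edge at height `h 0`. -/
structure DoubleHistogram where
  m : ℕ
  n : ℕ
  hm : 0 < m
  hn : 0 < n
  xs : Fin (m + 1) → ℝ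
  ys : Fin (n + 1) → ℝ
  d : Fin m → ℝ
  h : Fin n → ℝ
  xs_mono : StrictMono xs
  ys_mono : StrictMono ys
  left_eq : ys 0 = xs 0
  right_eq : ys (Fin.last n) = xs (Fin.last m)
  d_neg : ∀ i, d i < 0
  h_pos : ∀ j, 0 < h j
  /-- general position: no three vertices on a horizontal line -/
  d_inj : Function.Injective d
  h_inj : Function.Injective h
  /-- general position: no three vertices on a vertical line -/
  gen_pos : ∀ (i : Fin (m + 1)) (j : Fin (n + 1)), xs i = ys j →
      (i = 0 ∧ j = 0) ∨ (i = Fin.last m ∧ j = Fin.last n)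

/-- Among the reals in `A`, the one of minimum absolute value
(i.e. "closest to the base line"). -/
def closestToBase (A : Set ℝ) : ℝ :=
  sSup {y | y ∈ A ∧ ∀ y' ∈ A, |y| ≤ |y'|}

/-- The leftmost point of `S` among those minimizing the distance `|y|` to the base line. -/
def leftmostLowest (S : Set (ℝ × ℝ)) : ℝ × ℝ :=
  (sInf {x | ∃ y, (x, y) ∈ S ∧ ∀ q ∈ S, |y| ≤ |q.2|},
    closestToBase {y | (sInf {x | ∃ y', (x, y') ∈ S ∧ ∀ q ∈ S, |y'| ≤ |q.2|}, y) ∈ S})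

namespace DoubleHistogram

variable (H : DoubleHistogram)

/-- The polygon `P`, as a closed region of the plane. -/
def region : Set (ℝ × ℝ) :=
  (⋃ i : Fin H.m, Icc (H.xs i.castSucc) (H.xs i.succ) ×ˢ Icc (H.d i) 0) ∪
    ⋃ j : Fin H.n, Icc (H.ys j.castSucc) (H.ys j.succ) ×ˢ Icc 0 (H.h j)

/-- The vertex set `V(P)`. -/
def verts : Set (ℝ × ℝ) :=
  (⋃ i : Fin H.m,
      ({(H.xs i.castSucc, H.d i), (H.xs i.succ, H.d i)} : Set (ℝ × ℝ))) ∪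
    ⋃ j : Fin H.n,
      ({(H.ys j.castSucc, H.h j), (H.ys j.succ, H.h j)} : Set (ℝ × ℝ))

/-- `p` and `q` are co-visible: the axis-parallel rectangle they span lies in `P`. -/
def covisible (p q : ℝ × ℝ) : Prop :=
  Icc (min p.1 q.1) (max p.1 q.1) ×ˢ Icc (min p.2 q.2) (max p.2 q.2) ⊆ H.region

lemma covisible_symm {p q : ℝ × ℝ} (hpq : H.covisible p q) : H.covisible q p := by
  unfold covisible at hpq ⊢
  rwa [min_comm q.1 p.1, max_comm q.1 p.1, min_comm q.2 p.2, max_comm q.2 p.2]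

/-- The (unweighted) visibility graph `G(P)` on the vertices of `P`. -/
def visGraph : SimpleGraph ↥H.verts where
  Adj u v := u ≠ v ∧ H.covisible ↑u ↑v
  symm := ⟨fun _ _ hu => ⟨hu.1.symm, H.covisible_symm hu.2⟩⟩
  loopless := ⟨fun _ hu => hu.1 rfl⟩

/-- The closed neighborhood `N(v)`: `v` together with the vertices it sees. -/
def Nbr (v : ℝ × ℝ) : Set (ℝ × ℝ) :=
  {w | w ∈ H.verts ∧ (w = v ∨ H.covisible v w)}

/-- The abscissa where the leftward horizontal ray from `v` hits the boundary of `P`. -/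
def lhit (v : ℝ × ℝ) : ℝ :=
  sInf {x | x ≤ v.1 ∧ Icc x v.1 ×ˢ ({v.2} : Set ℝ) ⊆ H.region}

/-- The abscissa where the rightward horizontal ray from `v` hits the boundary of `P`. -/
def rhit (v : ℝ × ℝ) : ℝ :=
  sSup {x | v.1 ≤ x ∧ Icc v.1 x ×ˢ ({v.2} : Set ℝ) ⊆ H.region}

/-- The `y`-coordinate, among the vertices of `P` with abscissa `x` lying on the same side
of the base line as `side`, of the one closest to the base line (i.e. the endpoint of the
vertical edge at `x` closer to the base line). -/
def nearY (x : ℝ) (side : ℝ) : ℝ :=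
  if side < 0 then sSup {y | y < 0 ∧ (x, y) ∈ H.verts}
  else sInf {y | 0 < y ∧ (x, y) ∈ H.verts}

/-- The left point `ℓ(v)` (double-histogram version): if the leftward ray from `v` hits the
left boundary then the hit point, otherwise the endpoint of the hit vertical edge closer to
the base line. -/
def lpt (v : ℝ × ℝ) : ℝ × ℝ :=
  if H.lhit v = H.xs 0 then (H.xs 0, v.2) else (H.lhit v, H.nearY (H.lhit v) v.2)

/-- The right point `r(v)` (double-histogram version). -/
def rpt (v : ℝ × ℝ) : ℝ × ℝ :=
  if H.rhit v = H.xs (Fin.last H.m) then (H.xs (Fin.last H.m), v.2)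
  else (H.rhit v, H.nearY (H.rhit v) v.2)

/-- The left base vertex (for a simple histogram, i.e. `n = 1`). -/
def baseL : ℝ × ℝ := (H.xs 0, H.h ⟨0, H.hn⟩)

/-- The right base vertex (for a simple histogram, i.e. `n = 1`). -/
def baseR : ℝ × ℝ := (H.xs (Fin.last H.m), H.h ⟨0, H.hn⟩)

/-- The left point `ℓ(v)` (simple-histogram version): if the leftward ray from `v` hits the
left boundary then the left base vertex, otherwise the endpoint of the hit vertical edge
closer to the base edge. -/
def lptS (v : ℝ × ℝ) : ℝ × ℝ :=
  if H.lhit v = H.xs 0 then H.baseL else (H.lhit v, H.nearY (H.lhit v) v.2)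

/-- The right point `r(v)` (simple-histogram version). -/
def rptS (v : ℝ × ℝ) : ℝ × ℝ :=
  if H.rhit v = H.xs (Fin.last H.m) then H.baseR
  else (H.rhit v, H.nearY (H.rhit v) v.2)

/-- The interval `[p, q]`: all vertices of `P` between `p` and `q`. -/
def ivl (p q : ℝ × ℝ) : Set (ℝ × ℝ) :=
  {u | u ∈ H.verts ∧ p.1 ≤ u.1 ∧ u.1 ≤ q.1}

/-- The interval `I(v) = [ℓ(v), r(v)]` of a vertex (double-histogram version). -/
def Iv (v : ℝ × ℝ) : Set (ℝ × ℝ) := H.ivl (H.lpt v) (H.rpt v)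

/-- The interval `I(v) = [ℓ(v), r(v)]` of a vertex (simple-histogram version). -/
def IvS (v : ℝ × ℝ) : Set (ℝ × ℝ) := H.ivl (H.lptS v) (H.rptS v)

/-- The corresponding vertex `cv(v)`: the unique other vertex sharing a horizontal edge
(equivalently, by general position, the `y`-coordinate) with `v`. -/
def cv (v : ℝ × ℝ) : ℝ × ℝ :=
  (sSup {x | (x, v.2) ∈ H.verts ∧ x ≠ v.1}, v.2)

/-- `v` is a left vertex: the left endpoint of its horizontal edge. -/
def IsLeftVert (v : ℝ × ℝ) : Prop :=
  (∃ i : Fin H.m, v = (H.xs i.castSucc, H.d i)) ∨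
    ∃ j : Fin H.n, v = (H.ys j.castSucc, H.h j)

/-- `v` is a right vertex: the right endpoint of its horizontal edge. -/
def IsRightVert (v : ℝ × ℝ) : Prop :=
  (∃ i : Fin H.m, v = (H.xs i.succ, H.d i)) ∨
    ∃ j : Fin H.n, v = (H.ys j.succ, H.h j)

/-- `v` is an `ℓ`-reflex vertex (a left vertex with interior angle `3π/2`). -/
def IsLReflex (v : ℝ × ℝ) : Prop :=
  (∃ i : Fin H.m, ∃ _ : 0 < (i : ℕ),
      v = (H.xs i.castSucc, H.d i) ∧
        H.d ⟨(i : ℕ) - 1, lt_of_le_of_lt (Nat.sub_le _ _) i.isLt⟩ < H.d i) ∨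
    ∃ j : Fin H.n, ∃ _ : 0 < (j : ℕ),
      v = (H.ys j.castSucc, H.h j) ∧
        H.h j < H.h ⟨(j : ℕ) - 1, lt_of_le_of_lt (Nat.sub_le _ _) j.isLt⟩

/-- `v` is an `r`-reflex vertex (a right vertex with interior angle `3π/2`). -/
def IsRReflex (v : ℝ × ℝ) : Prop :=
  (∃ i : Fin H.m, ∃ hi : (i : ℕ) + 1 < H.m,
      v = (H.xs i.succ, H.d i) ∧ H.d ⟨(i : ℕ) + 1, hi⟩ < H.d i) ∨
    ∃ j : Fin H.n, ∃ hj : (j : ℕ) + 1 < H.n,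
      v = (H.ys j.succ, H.h j) ∧ H.h j < H.h ⟨(j : ℕ) + 1, hj⟩

/-- `v` is a reflex vertex. -/
def IsReflex (v : ℝ × ℝ) : Prop := H.IsLReflex v ∨ H.IsRReflex v

/-- The near dominator `nd(s,t)`: for `t` strictly right of `s`, the rightmost vertex of
`N(s)` to the left of `t`, ties broken towards the base line (symmetric otherwise). -/
def nd (s t : ℝ × ℝ) : ℝ × ℝ :=
  if s.1 < t.1 then
    let nx := sSup {x | (∃ y, (x, y) ∈ H.Nbr s) ∧ x ≤ t.1}
    (nx, closestToBase {y | (nx, y) ∈ H.Nbr s})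
  else
    let nx := sInf {x | (∃ y, (x, y) ∈ H.Nbr s) ∧ t.1 ≤ x}
    (nx, closestToBase {y | (nx, y) ∈ H.Nbr s})

/-- The far dominator `fd(s,t)`: for `t` strictly right of `s`, the leftmost vertex of
`N(s)` to the right of `t`, ties broken towards the base line; if there is no such vertex,
the point `r(s)` (symmetric otherwise). -/
def fd (s t : ℝ × ℝ) : ℝ × ℝ :=
  if s.1 < t.1 then
    if ∃ w ∈ H.Nbr s, t.1 ≤ w.1 then
      let nx := sInf {x | (∃ y, (x, y) ∈ H.Nbr s) ∧ t.1 ≤ x}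
      (nx, closestToBase {y | (nx, y) ∈ H.Nbr s})
    else H.rpt s
  else
    if ∃ w ∈ H.Nbr s, w.1 ≤ t.1 then
      let nx := sSup {x | (∃ y, (x, y) ∈ H.Nbr s) ∧ x ≤ t.1}
      (nx, closestToBase {y | (nx, y) ∈ H.Nbr s})
    else H.lpt s

/-- The sequence `a^i(s)`: `a^0(s) = s`, and `a^i(s)` is the leftmost vertex of
`A^i(s) = {v ∈ N(s) : ℓ(v)_x < ℓ(a^{i-1}(s))_x}` (ties towards the base line),
or `a^{i-1}(s)` if `A^i(s)` is empty. -/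
def aSeq (s : ℝ × ℝ) : ℕ → ℝ × ℝ := fun k =>
  Nat.rec (motive := fun _ => ℝ × ℝ) s
    (fun _ prev =>
      let A : Set (ℝ × ℝ) := {v | v ∈ H.Nbr s ∧ (H.lpt v).1 < (H.lpt prev).1}
      if A = ∅ then prev
      else
        let ax := sInf {x | ∃ y, (x, y) ∈ A}
        (ax, closestToBase {y | (ax, y) ∈ A}))
    k

/-- The sequence `b^i(s)`: `b^0(s) = s`, and `b^i(s)` is the rightmost vertex of
`B^i(s) = {v ∈ N(s) : r(v)_x > r(b^{i-1}(s))_x}` (ties towards the base line),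
or `b^{i-1}(s)` if `B^i(s)` is empty. -/
def bSeq (s : ℝ × ℝ) : ℕ → ℝ × ℝ := fun k =>
  Nat.rec (motive := fun _ => ℝ × ℝ) s
    (fun _ prev =>
      let B : Set (ℝ × ℝ) := {v | v ∈ H.Nbr s ∧ (H.rpt prev).1 < (H.rpt v).1}
      if B = ∅ then prev
      else
        let bx := sSup {x | ∃ y, (x, y) ∈ B}
        (bx, closestToBase {y | (bx, y) ∈ B}))
    k

/-- The pair of the `k`-th bottom dominator `bd^k(s)` and `k`-th top dominator `td^k(s)`:
`bd^0(s) = td^0(s) = s`; for `k > 0`, with `I^k(s) = I(bd^{k-1}(s)) ∪ I(td^{k-1}(s))`,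
`bd^k(s)` is the leftmost vertex of `I^k(s)⁻` minimizing the distance to the base line,
and `td^k(s)` the leftmost vertex of `I^k(s)⁺` minimizing the distance to the base line;
if one of the two sets is empty, the corresponding dominator equals the other one. -/
def bdtd (s : ℝ × ℝ) : ℕ → (ℝ × ℝ) × (ℝ × ℝ) := fun k =>
  Nat.rec (motive := fun _ => (ℝ × ℝ) × (ℝ × ℝ)) (s, s)
    (fun _ p =>
      let J : Set (ℝ × ℝ) := H.Iv p.1 ∪ H.Iv p.2
      let Jm : Set (ℝ × ℝ) := {v | v ∈ J ∧ v.2 < 0}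
      let Jp : Set (ℝ × ℝ) := {v | v ∈ J ∧ 0 < v.2}
      if Jm = ∅ then (leftmostLowest Jp, leftmostLowest Jp)
      else if Jp = ∅ then (leftmostLowest Jm, leftmostLowest Jm)
      else (leftmostLowest Jm, leftmostLowest Jp))
    k

/-- The `k`-th interval `I^k(s)`: `I^0(s) = {s}` and
`I^{k+1}(s) = I(bd^k(s)) ∪ I(td^k(s))`. -/
def Ipow (s : ℝ × ℝ) : ℕ → Set (ℝ × ℝ) := fun k =>
  Nat.rec (motive := fun _ => Set (ℝ × ℝ)) {s}
    (fun k _ => H.Iv (H.bdtd s k).1 ∪ H.Iv (H.bdtd s k).2) k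

/-- `w` lies on a shortest path from `s` to `t` in the visibility graph. -/
def OnShortestPath (s t w : ↥H.verts) : Prop :=
  ∃ p : H.visGraph.Walk s t, p.length = H.visGraph.dist s t ∧ w ∈ p.support

end DoubleHistogram

/-- A routing scheme for a graph `G`: every vertex carries a binary label and a binary
routing table, and the routing function maps (link table of the current vertex, routing
table of the current vertex, label of the target, current header) to the next vertex
together with the new header. -/
structure RoutingScheme {V : Type} (G : SimpleGraph V) where
  lab : V → List Bool
  tab : V → List Bool
  route : Set (List Bool) → List Bool → List Bool → List Bool → V × List Bool

namespace RoutingScheme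

variable {V : Type} {G : SimpleGraph V} (R : RoutingScheme G)

/-- One routing step at vertex `p` with header `h`, towards the target `t`: the routing
function is applied to the link table of `p` (the labels of its closed neighborhood),
the routing table of `p`, the label of `t` and the header `h`. -/
def step (t p : V) (h : List Bool) : V × List Bool :=
  R.route (R.lab '' {w | w = p ∨ G.Adj p w}) (R.tab p) (R.lab t) h

/-- The routing sequence from `s` towards `t`, starting with the empty header. -/
def seq (s t : V) : ℕ → V × List Bool := fun k =>
  Nat.rec (motive := fun _ => V × List Bool) (s, ([] : List Bool))
    (fun _ q => R.step t q.1 q.2) k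

end RoutingScheme


/-! ### Auxiliary lemmas -/

section Aux

open Set

/-- Covering lemma: a monotone subdivision covers its range. -/
lemma exists_col {m : ℕ} (hm : 0 < m) (f : Fin (m + 1) → ℝ) (hf : Monotone f) {x : ℝ}
    (h0 : f 0 ≤ x) (h1 : x ≤ f (Fin.last m)) :
    ∃ i : Fin m, f i.castSucc ≤ x ∧ x ≤ f i.succ := by
  classical
  set T : Finset (Fin (m + 1)) := Finset.univ.filter (fun i => f i ≤ x) with hT
  have hTne : T.Nonempty := ⟨0, by simp [hT, h0]⟩
  set i0 := T.max' hTne with hi0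
  have hi0T : i0 ∈ T := T.max'_mem hTne
  have hfi0 : f i0 ≤ x := by
    have := hi0T
    simp only [hT, Finset.mem_filter] at this
    exact this.2
  by_cases hlt : (i0 : ℕ) < m
  · refine ⟨⟨(i0 : ℕ), hlt⟩, ?_, ?_⟩
    · have hcs : (⟨(i0 : ℕ), hlt⟩ : Fin m).castSucc = i0 := by
        ext; simp
      rw [hcs]; exact hfi0
    · by_contra hcon
      push_neg at hcon
      have hmem : (⟨(i0 : ℕ), hlt⟩ : Fin m).succ ∈ T := by
        simp only [hT, Finset.mem_filter, Finset.mem_univ, true_and]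
        exact le_of_lt hcon
      have hle := T.le_max' _ hmem
      rw [← hi0] at hle
      have hval : ((⟨(i0 : ℕ), hlt⟩ : Fin m).succ : ℕ) ≤ (i0 : ℕ) := hle
      simp only [Fin.val_succ] at hval
      omega
  · have him : (i0 : ℕ) = m := le_antisymm (Nat.lt_succ_iff.mp i0.isLt) (le_of_not_gt hlt)
    refine ⟨⟨m - 1, by omega⟩, ?_, ?_⟩
    · have h2 : f (⟨m - 1, by omega⟩ : Fin m).castSucc ≤ f i0 := by
        apply hf
        rw [Fin.le_def]
        simp only [Fin.coe_castSucc]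
        omega
      exact le_trans h2 hfi0
    · have h2 : (⟨m - 1, by omega⟩ : Fin m).succ = Fin.last m := by
        ext
        simp only [Fin.val_succ, Fin.val_last]
        omega
      rw [h2]; exact h1

lemma closestToBase_neg {A : Set ℝ} (hA : A.Finite) (hne : A.Nonempty)
    (hneg : ∀ y ∈ A, y < 0) : closestToBase A = sSup A := by
  have hmem : sSup A ∈ A := hne.csSup_mem hA
  have hub : ∀ y ∈ A, y ≤ sSup A := fun y hy => le_csSup hA.bddAbove hy
  have hset : {y | y ∈ A ∧ ∀ y' ∈ A, |y| ≤ |y'|} = {sSup A} := by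
    ext y
    simp only [Set.mem_setOf_eq, Set.mem_singleton_iff]
    constructor
    · rintro ⟨hyA, hmin⟩
      have h2 := hmin (sSup A) hmem
      rw [abs_of_neg (hneg y hyA), abs_of_neg (hneg _ hmem)] at h2
      exact le_antisymm (hub y hyA) (by linarith)
    · rintro rfl
      refine ⟨hmem, fun y' hy' => ?_⟩
      rw [abs_of_neg (hneg _ hmem), abs_of_neg (hneg y' hy')]
      linarith [hub y' hy']
  rw [closestToBase, hset, csSup_singleton]

lemma closestToBase_pos {A : Set ℝ} (hA : A.Finite) (hne : A.Nonempty)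
    (hpos : ∀ y ∈ A, 0 < y) : closestToBase A = sInf A := by
  have hmem : sInf A ∈ A := hne.csInf_mem hA
  have hlb : ∀ y ∈ A, sInf A ≤ y := fun y hy => csInf_le hA.bddBelow hy
  have hset : {y | y ∈ A ∧ ∀ y' ∈ A, |y| ≤ |y'|} = {sInf A} := by
    ext y
    simp only [Set.mem_setOf_eq, Set.mem_singleton_iff]
    constructor
    · rintro ⟨hyA, hmin⟩
      have h2 := hmin (sInf A) hmem
      rw [abs_of_pos (hpos y hyA), abs_of_pos (hpos _ hmem)] at h2
      exact le_antisymm h2 (hlb y hyA)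
    · rintro rfl
      refine ⟨hmem, fun y' hy' => ?_⟩
      rw [abs_of_pos (hpos _ hmem), abs_of_pos (hpos y' hy')]
      exact hlb y' hy'
  rw [closestToBase, hset, csSup_singleton]

lemma leftmostLowest_spec_neg {S : Set (ℝ × ℝ)} (hS : S.Finite) (hne : S.Nonempty)
    (hneg : ∀ v ∈ S, v.2 < 0) :
    leftmostLowest S ∈ S ∧ ∀ v ∈ S, v.2 ≤ (leftmostLowest S).2 := by
  have hYf : (Prod.snd '' S).Finite := hS.image _
  have hYne : (Prod.snd '' S).Nonempty := hne.image _
  set y0 := sSup (Prod.snd '' S) with hy0def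
  have hy0 : y0 ∈ Prod.snd '' S := hYne.csSup_mem hYf
  have hy0ub : ∀ v ∈ S, v.2 ≤ y0 := fun v hv => le_csSup hYf.bddAbove ⟨v, hv, rfl⟩
  have hy0neg : y0 < 0 := by
    obtain ⟨v, hv, hveq⟩ := hy0
    rw [← hveq]; exact hneg v hv
  obtain ⟨v0, hv0, hv0eq⟩ := hy0
  have hv0' : (v0.1, y0) ∈ S := by rw [← hv0eq]; exact hv0
  have hM : {x | ∃ y, (x, y) ∈ S ∧ ∀ q ∈ S, |y| ≤ |q.2|} = {x | (x, y0) ∈ S} := by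
    ext x
    simp only [Set.mem_setOf_eq]
    constructor
    · rintro ⟨y, hyS, hmin⟩
      have h1 : y ≤ y0 := hy0ub _ hyS
      have h2 : |y| ≤ |y0| := by simpa using hmin _ hv0'
      rw [abs_of_neg (hneg _ hyS), abs_of_neg hy0neg] at h2
      have hyy : y = y0 := le_antisymm h1 (by linarith)
      rw [← hyy]; exact hyS
    · intro hx
      refine ⟨y0, hx, fun q hq => ?_⟩
      rw [abs_of_neg hy0neg, abs_of_neg (hneg q hq)]
      linarith [hy0ub q hq]
  unfold leftmostLowest
  rw [hM]
  set M := {x | (x, y0) ∈ S} with hMdef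
  have hMne : M.Nonempty := ⟨v0.1, hv0'⟩
  have hMf : M.Finite := (hS.image Prod.fst).subset (fun x hx => ⟨(x, y0), hx, rfl⟩)
  have hnx : sInf M ∈ M := hMne.csInf_mem hMf
  set A := {y | (sInf M, y) ∈ S} with hAdef
  have hy0A : y0 ∈ A := hnx
  have hAf : A.Finite := hYf.subset (fun y hy => ⟨(sInf M, y), hy, rfl⟩)
  have hAneg : ∀ y ∈ A, y < 0 := fun y hy => hneg _ hy
  have hsupA : sSup A = y0 :=
    le_antisymm (csSup_le ⟨y0, hy0A⟩ (fun y hy => hy0ub _ hy)) (le_csSup hAf.bddAbove hy0A)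
  rw [closestToBase_neg hAf ⟨y0, hy0A⟩ hAneg, hsupA]
  exact ⟨hnx, fun v hv => hy0ub v hv⟩

lemma leftmostLowest_spec_pos {S : Set (ℝ × ℝ)} (hS : S.Finite) (hne : S.Nonempty)
    (hpos : ∀ v ∈ S, 0 < v.2) :
    leftmostLowest S ∈ S ∧ ∀ v ∈ S, (leftmostLowest S).2 ≤ v.2 := by
  have hYf : (Prod.snd '' S).Finite := hS.image _
  have hYne : (Prod.snd '' S).Nonempty := hne.image _
  set y0 := sInf (Prod.snd '' S) with hy0def
  have hy0 : y0 ∈ Prod.snd '' S := hYne.csInf_mem hYf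
  have hy0lb : ∀ v ∈ S, y0 ≤ v.2 := fun v hv => csInf_le hYf.bddBelow ⟨v, hv, rfl⟩
  have hy0pos : 0 < y0 := by
    obtain ⟨v, hv, hveq⟩ := hy0
    rw [← hveq]; exact hpos v hv
  obtain ⟨v0, hv0, hv0eq⟩ := hy0
  have hv0' : (v0.1, y0) ∈ S := by rw [← hv0eq]; exact hv0
  have hM : {x | ∃ y, (x, y) ∈ S ∧ ∀ q ∈ S, |y| ≤ |q.2|} = {x | (x, y0) ∈ S} := by
    ext x
    simp only [Set.mem_setOf_eq]
    constructor
    · rintro ⟨y, hyS, hmin⟩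
      have h1 : y0 ≤ y := hy0lb _ hyS
      have h2 : |y| ≤ |y0| := by simpa using hmin _ hv0'
      rw [abs_of_pos (hpos _ hyS), abs_of_pos hy0pos] at h2
      have hyy : y = y0 := le_antisymm h2 h1
      rw [← hyy]; exact hyS
    · intro hx
      refine ⟨y0, hx, fun q hq => ?_⟩
      rw [abs_of_pos hy0pos, abs_of_pos (hpos q hq)]
      exact hy0lb q hq
  unfold leftmostLowest
  rw [hM]
  set M := {x | (x, y0) ∈ S} with hMdef
  have hMne : M.Nonempty := ⟨v0.1, hv0'⟩
  have hMf : M.Finite := (hS.image Prod.fst).subset (fun x hx => ⟨(x, y0), hx, rfl⟩)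
  have hnx : sInf M ∈ M := hMne.csInf_mem hMf
  set A := {y | (sInf M, y) ∈ S} with hAdef
  have hy0A : y0 ∈ A := hnx
  have hAf : A.Finite := hYf.subset (fun y hy => ⟨(sInf M, y), hy, rfl⟩)
  have hApos : ∀ y ∈ A, 0 < y := fun y hy => hpos _ hy
  have hinfA : sInf A = y0 :=
    le_antisymm (csInf_le hAf.bddBelow hy0A) (le_csInf ⟨y0, hy0A⟩ (fun y hy => hy0lb _ hy))
  rw [closestToBase_pos hAf ⟨y0, hy0A⟩ hApos, hinfA]
  exact ⟨hnx, fun v hv => hy0lb v hv⟩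

end Aux

namespace DoubleHistogram

variable (H : DoubleHistogram)

lemma verts_finite : H.verts.Finite := by
  unfold verts
  apply Set.Finite.union <;> apply Set.finite_iUnion <;> intro i <;>
    exact (Set.finite_singleton _).insert _

lemma bl_mem (i : Fin H.m) : (H.xs i.castSucc, H.d i) ∈ H.verts :=
  Set.mem_union_left _ (Set.mem_iUnion.2 ⟨i, by simp⟩)

lemma br_mem (i : Fin H.m) : (H.xs i.succ, H.d i) ∈ H.verts :=
  Set.mem_union_left _ (Set.mem_iUnion.2 ⟨i, by simp⟩)

lemma tl_mem (j : Fin H.n) : (H.ys j.castSucc, H.h j) ∈ H.verts :=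
  Set.mem_union_right _ (Set.mem_iUnion.2 ⟨j, by simp⟩)

lemma tr_mem (j : Fin H.n) : (H.ys j.succ, H.h j) ∈ H.verts :=
  Set.mem_union_right _ (Set.mem_iUnion.2 ⟨j, by simp⟩)

lemma verts_cases {v : ℝ × ℝ} (hv : v ∈ H.verts) :
    (∃ i : Fin H.m, v.2 = H.d i ∧ (v.1 = H.xs i.castSucc ∨ v.1 = H.xs i.succ)) ∨
    (∃ j : Fin H.n, v.2 = H.h j ∧ (v.1 = H.ys j.castSucc ∨ v.1 = H.ys j.succ)) := by
  unfold verts at hv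
  rcases hv with hv | hv
  · left
    obtain ⟨i, hi⟩ := Set.mem_iUnion.1 hv
    simp only [Set.mem_insert_iff, Set.mem_singleton_iff] at hi
    rcases hi with hi | hi
    · exact ⟨i, by rw [hi], Or.inl (by rw [hi])⟩
    · exact ⟨i, by rw [hi], Or.inr (by rw [hi])⟩
  · right
    obtain ⟨j, hj⟩ := Set.mem_iUnion.1 hv
    simp only [Set.mem_insert_iff, Set.mem_singleton_iff] at hj
    rcases hj with hj | hj
    · exact ⟨j, by rw [hj], Or.inl (by rw [hj])⟩
    · exact ⟨j, by rw [hj], Or.inr (by rw [hj])⟩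

lemma mem_region_x {p : ℝ × ℝ} (hp : p ∈ H.region) :
    H.xs 0 ≤ p.1 ∧ p.1 ≤ H.xs (Fin.last H.m) := by
  unfold region at hp
  rcases hp with hp | hp
  · obtain ⟨i, hi⟩ := Set.mem_iUnion.1 hp
    simp only [Set.mem_prod, Set.mem_Icc] at hi
    obtain ⟨⟨h1, h2⟩, -⟩ := hi
    exact ⟨le_trans (H.xs_mono.monotone (Fin.zero_le _)) h1,
      le_trans h2 (H.xs_mono.monotone (Fin.le_last _))⟩
  · obtain ⟨j, hj⟩ := Set.mem_iUnion.1 hp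
    simp only [Set.mem_prod, Set.mem_Icc] at hj
    obtain ⟨⟨h1, h2⟩, -⟩ := hj
    constructor
    · rw [← H.left_eq]
      exact le_trans (H.ys_mono.monotone (Fin.zero_le _)) h1
    · rw [← H.right_eq]
      exact le_trans h2 (H.ys_mono.monotone (Fin.le_last _))

lemma verts_subset_region : H.verts ⊆ H.region := by
  intro v hv
  rcases H.verts_cases hv with ⟨i, h2, h1⟩ | ⟨j, h2, h1⟩
  · refine Set.mem_union_left _ (Set.mem_iUnion.2 ⟨i, ?_⟩)
    simp only [Set.mem_prod, Set.mem_Icc]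
    have hle := le_of_lt (H.xs_mono (Fin.castSucc_lt_succ : i.castSucc < i.succ))
    constructor
    · rcases h1 with h1 | h1 <;> rw [h1]
      · exact ⟨le_rfl, hle⟩
      · exact ⟨hle, le_rfl⟩
    · rw [h2]; exact ⟨le_rfl, le_of_lt (H.d_neg i)⟩
  · refine Set.mem_union_right _ (Set.mem_iUnion.2 ⟨j, ?_⟩)
    simp only [Set.mem_prod, Set.mem_Icc]
    have hle := le_of_lt (H.ys_mono (Fin.castSucc_lt_succ : j.castSucc < j.succ))
    constructor
    · rcases h1 with h1 | h1 <;> rw [h1]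
      · exact ⟨le_rfl, hle⟩
      · exact ⟨hle, le_rfl⟩
    · rw [h2]; exact ⟨le_of_lt (H.h_pos j), le_rfl⟩

lemma lhit_bddBelow (v : ℝ × ℝ) :
    BddBelow {x | x ≤ v.1 ∧ Icc x v.1 ×ˢ ({v.2} : Set ℝ) ⊆ H.region} := by
  refine ⟨H.xs 0, ?_⟩
  rintro x ⟨hx1, hx2⟩
  have hmem : (x, v.2) ∈ H.region := hx2 (Set.mk_mem_prod ⟨le_rfl, hx1⟩ rfl)
  exact (H.mem_region_x hmem).1

lemma self_mem_lhit_set {v : ℝ × ℝ} (hv : v ∈ H.verts) :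
    v.1 ∈ {x | x ≤ v.1 ∧ Icc x v.1 ×ˢ ({v.2} : Set ℝ) ⊆ H.region} := by
  refine ⟨le_rfl, ?_⟩
  rintro ⟨a, b⟩ hab
  simp only [Set.mem_prod, Set.mem_Icc, Set.mem_singleton_iff] at hab
  obtain ⟨⟨ha1, ha2⟩, hb⟩ := hab
  have ha : a = v.1 := le_antisymm ha2 ha1
  rw [ha, hb]
  exact H.verts_subset_region hv

lemma lhit_le_self {v : ℝ × ℝ} (hv : v ∈ H.verts) : H.lhit v ≤ v.1 :=
  csInf_le (H.lhit_bddBelow v) (H.self_mem_lhit_set hv)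

lemma xs0_le_lhit {v : ℝ × ℝ} (hv : v ∈ H.verts) : H.xs 0 ≤ H.lhit v := by
  apply le_csInf ⟨v.1, H.self_mem_lhit_set hv⟩
  rintro x ⟨hx1, hx2⟩
  have hmem : (x, v.2) ∈ H.region := hx2 (Set.mk_mem_prod ⟨le_rfl, hx1⟩ rfl)
  exact (H.mem_region_x hmem).1

lemma lhit_le {v : ℝ × ℝ} {a : ℝ} (ha : a ≤ v.1)
    (hsub : Icc a v.1 ×ˢ ({v.2} : Set ℝ) ⊆ H.region) : H.lhit v ≤ a :=
  csInf_le (H.lhit_bddBelow v) ⟨ha, hsub⟩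

lemma rhit_bddAbove (v : ℝ × ℝ) :
    BddAbove {x | v.1 ≤ x ∧ Icc v.1 x ×ˢ ({v.2} : Set ℝ) ⊆ H.region} := by
  refine ⟨H.xs (Fin.last H.m), ?_⟩
  rintro x ⟨hx1, hx2⟩
  have hmem : (x, v.2) ∈ H.region := hx2 (Set.mk_mem_prod ⟨hx1, le_rfl⟩ rfl)
  exact (H.mem_region_x hmem).2

lemma self_mem_rhit_set {v : ℝ × ℝ} (hv : v ∈ H.verts) :
    v.1 ∈ {x | v.1 ≤ x ∧ Icc v.1 x ×ˢ ({v.2} : Set ℝ) ⊆ H.region} := by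
  refine ⟨le_rfl, ?_⟩
  rintro ⟨a, b⟩ hab
  simp only [Set.mem_prod, Set.mem_Icc, Set.mem_singleton_iff] at hab
  obtain ⟨⟨ha1, ha2⟩, hb⟩ := hab
  have ha : a = v.1 := le_antisymm ha2 ha1
  rw [ha, hb]
  exact H.verts_subset_region hv

lemma self_le_rhit {v : ℝ × ℝ} (hv : v ∈ H.verts) : v.1 ≤ H.rhit v :=
  le_csSup (H.rhit_bddAbove v) (H.self_mem_rhit_set hv)

lemma rhit_le_xslast {v : ℝ × ℝ} (hv : v ∈ H.verts) : H.rhit v ≤ H.xs (Fin.last H.m) := by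
  apply csSup_le ⟨v.1, H.self_mem_rhit_set hv⟩
  rintro x ⟨hx1, hx2⟩
  have hmem : (x, v.2) ∈ H.region := hx2 (Set.mk_mem_prod ⟨hx1, le_rfl⟩ rfl)
  exact (H.mem_region_x hmem).2

lemma le_rhit {v : ℝ × ℝ} {b : ℝ} (hb : v.1 ≤ b)
    (hsub : Icc v.1 b ×ˢ ({v.2} : Set ℝ) ⊆ H.region) : b ≤ H.rhit v :=
  le_csSup (H.rhit_bddAbove v) ⟨hb, hsub⟩

lemma lpt_fst (v : ℝ × ℝ) : (H.lpt v).1 = H.lhit v := by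
  unfold lpt
  split
  · next h => exact h.symm
  · rfl

lemma rpt_fst (v : ℝ × ℝ) : (H.rpt v).1 = H.rhit v := by
  unfold rpt
  split
  · next h => exact h.symm
  · rfl

lemma mem_Iv {v w : ℝ × ℝ} :
    w ∈ H.Iv v ↔ w ∈ H.verts ∧ H.lhit v ≤ w.1 ∧ w.1 ≤ H.rhit v := by
  simp only [Iv, ivl, Set.mem_setOf_eq, H.lpt_fst, H.rpt_fst]

lemma Iv_subset_verts (v : ℝ × ℝ) : H.Iv v ⊆ H.verts :=
  fun _ hw => (H.mem_Iv.1 hw).1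

lemma self_mem_Iv {v : ℝ × ℝ} (hv : v ∈ H.verts) : v ∈ H.Iv v :=
  H.mem_Iv.2 ⟨hv, H.lhit_le_self hv, H.self_le_rhit hv⟩

lemma key_bot {u : ℝ × ℝ} {a b : ℝ} (hu : u ∈ H.verts) (hun : u.2 < 0)
    (ha0 : H.xs 0 ≤ a) (hau : a ≤ u.1) (hub : u.1 ≤ b) (hbl : b ≤ H.xs (Fin.last H.m))
    (hmin : ∀ v ∈ H.verts, v.2 < 0 → a ≤ v.1 → v.1 ≤ b → v.2 ≤ u.2) :
    Icc a b ×ˢ ({u.2} : Set ℝ) ⊆ H.region := by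
  rintro ⟨x, y⟩ hxy
  simp only [Set.mem_prod, Set.mem_Icc, Set.mem_singleton_iff] at hxy
  obtain ⟨⟨hx1, hx2⟩, hy⟩ := hxy
  subst hy
  obtain ⟨i, hi1, hi2⟩ :=
    exists_col H.hm H.xs H.xs_mono.monotone (le_trans ha0 hx1) (le_trans hx2 hbl)
  have hdi : H.d i ≤ u.2 := by
    by_contra hcon
    push_neg at hcon
    have hjx : ∃ j : Fin (H.m + 1), u.1 = H.xs j := by
      rcases H.verts_cases hu with ⟨i', h2, h1⟩ | ⟨j', h2, -⟩
      · rcases h1 with h1 | h1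
        exacts [⟨i'.castSucc, h1⟩, ⟨i'.succ, h1⟩]
      · exfalso
        rw [h2] at hun
        exact absurd hun (not_lt.2 (le_of_lt (H.h_pos j')))
    by_cases hcs : a ≤ H.xs i.castSucc
    · exact absurd (hmin _ (H.bl_mem i) (H.d_neg i) hcs (le_trans hi1 hx2)) (not_le.2 hcon)
    · push_neg at hcs
      by_cases hsc : H.xs i.succ ≤ b
      · exact absurd (hmin _ (H.br_mem i) (H.d_neg i) (le_trans hx1 hi2) hsc) (not_le.2 hcon)
      · push_neg at hsc
        obtain ⟨j, hj⟩ := hjx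
        have h1 : i.castSucc < j := H.xs_mono.lt_iff_lt.1 (by rw [← hj]; linarith)
        have h2 : j < i.succ := H.xs_mono.lt_iff_lt.1 (by rw [← hj]; linarith)
        rw [Fin.lt_def] at h1 h2
        simp only [Fin.coe_castSucc, Fin.val_succ] at h1 h2
        omega
  refine Set.mem_union_left _ (Set.mem_iUnion.2 ⟨i, ?_⟩)
  exact Set.mk_mem_prod (Set.mem_Icc.2 ⟨hi1, hi2⟩) (Set.mem_Icc.2 ⟨hdi, le_of_lt hun⟩)

lemma key_top {u : ℝ × ℝ} {a b : ℝ} (hu : u ∈ H.verts) (hup : 0 < u.2)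
    (ha0 : H.xs 0 ≤ a) (hau : a ≤ u.1) (hub : u.1 ≤ b) (hbl : b ≤ H.xs (Fin.last H.m))
    (hmin : ∀ v ∈ H.verts, 0 < v.2 → a ≤ v.1 → v.1 ≤ b → u.2 ≤ v.2) :
    Icc a b ×ˢ ({u.2} : Set ℝ) ⊆ H.region := by
  rintro ⟨x, y⟩ hxy
  simp only [Set.mem_prod, Set.mem_Icc, Set.mem_singleton_iff] at hxy
  obtain ⟨⟨hx1, hx2⟩, hy⟩ := hxy
  subst hy
  have ha0' : H.ys 0 ≤ a := by rw [H.left_eq]; exact ha0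
  have hbl' : b ≤ H.ys (Fin.last H.n) := by rw [H.right_eq]; exact hbl
  obtain ⟨j, hj1, hj2⟩ :=
    exists_col H.hn H.ys H.ys_mono.monotone (le_trans ha0' hx1) (le_trans hx2 hbl')
  have hdj : u.2 ≤ H.h j := by
    by_contra hcon
    push_neg at hcon
    have hjx : ∃ j' : Fin (H.n + 1), u.1 = H.ys j' := by
      rcases H.verts_cases hu with ⟨i', h2, -⟩ | ⟨j', h2, h1⟩
      · exfalso
        rw [h2] at hup
        exact absurd hup (not_lt.2 (le_of_lt (H.d_neg i')))
      · rcases h1 with h1 | h1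
        exacts [⟨j'.castSucc, h1⟩, ⟨j'.succ, h1⟩]
    by_cases hcs : a ≤ H.ys j.castSucc
    · exact absurd (hmin _ (H.tl_mem j) (H.h_pos j) hcs (le_trans hj1 hx2)) (not_le.2 hcon)
    · push_neg at hcs
      by_cases hsc : H.ys j.succ ≤ b
      · exact absurd (hmin _ (H.tr_mem j) (H.h_pos j) (le_trans hx1 hj2) hsc) (not_le.2 hcon)
      · push_neg at hsc
        obtain ⟨j', hj'⟩ := hjx
        have h1 : j.castSucc < j' := H.ys_mono.lt_iff_lt.1 (by rw [← hj']; linarith)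
        have h2 : j' < j.succ := H.ys_mono.lt_iff_lt.1 (by rw [← hj']; linarith)
        rw [Fin.lt_def] at h1 h2
        simp only [Fin.coe_castSucc, Fin.val_succ] at h1 h2
        omega
  refine Set.mem_union_right _ (Set.mem_iUnion.2 ⟨j, ?_⟩)
  exact Set.mk_mem_prod (Set.mem_Icc.2 ⟨hj1, hj2⟩) (Set.mem_Icc.2 ⟨le_of_lt hup, hdj⟩)

lemma dom_bot {p q : ℝ × ℝ} (hpv : p ∈ H.verts) (hqv : q ∈ H.verts)
    (hpp : p ∈ H.Iv p) (hpq : p ∈ H.Iv q)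
    (hJm : {v | v ∈ H.Iv p ∪ H.Iv q ∧ v.2 < 0}.Nonempty) :
    leftmostLowest {v | v ∈ H.Iv p ∪ H.Iv q ∧ v.2 < 0} ∈ H.Iv p ∪ H.Iv q ∧
      H.Iv p ∪ H.Iv q ⊆ H.Iv (leftmostLowest {v | v ∈ H.Iv p ∪ H.Iv q ∧ v.2 < 0}) := by
  have hJv : H.Iv p ∪ H.Iv q ⊆ H.verts :=
    Set.union_subset (H.Iv_subset_verts p) (H.Iv_subset_verts q)
  have hJmf : {v | v ∈ H.Iv p ∪ H.Iv q ∧ v.2 < 0}.Finite :=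
    H.verts_finite.subset (fun v hv => hJv hv.1)
  obtain ⟨huS, humin⟩ := leftmostLowest_spec_neg hJmf hJm (fun v hv => hv.2)
  set u := leftmostLowest {v | v ∈ H.Iv p ∪ H.Iv q ∧ v.2 < 0} with hu
  obtain ⟨huJ, hun⟩ := huS
  set a := min (H.lhit p) (H.lhit q) with ha
  set b := max (H.rhit p) (H.rhit q) with hb
  have hp1 := H.mem_Iv.1 hpp
  have hp2 := H.mem_Iv.1 hpq
  have hchar : ∀ w, w ∈ H.Iv p ∪ H.Iv q ↔ (w ∈ H.verts ∧ a ≤ w.1 ∧ w.1 ≤ b) := by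
    intro w
    constructor
    · rintro (hw | hw) <;> obtain ⟨h1, h2, h3⟩ := H.mem_Iv.1 hw
      · exact ⟨h1, le_trans (min_le_left _ _) h2, le_trans h3 (le_max_left _ _)⟩
      · exact ⟨h1, le_trans (min_le_right _ _) h2, le_trans h3 (le_max_right _ _)⟩
    · rintro ⟨h1, h2, h3⟩
      rcases min_le_iff.1 h2 with h4 | h4
      · by_cases h5 : w.1 ≤ H.rhit p
        · exact Or.inl (H.mem_Iv.2 ⟨h1, h4, h5⟩)
        · push_neg at h5
          rcases le_max_iff.1 h3 with h6 | h6
          · exact absurd h6 (not_le.2 h5)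
          · exact Or.inr (H.mem_Iv.2
              ⟨h1, le_trans hp2.2.1 (le_trans hp1.2.2 (le_of_lt h5)), h6⟩)
      · by_cases h5 : w.1 ≤ H.rhit q
        · exact Or.inr (H.mem_Iv.2 ⟨h1, h4, h5⟩)
        · push_neg at h5
          rcases le_max_iff.1 h3 with h6 | h6
          · exact Or.inl (H.mem_Iv.2
              ⟨h1, le_trans hp1.2.1 (le_trans hp2.2.2 (le_of_lt h5)), h6⟩)
          · exact absurd h6 (not_le.2 h5)
  have huv : u ∈ H.verts := hJv huJ
  obtain ⟨-, hau, hub⟩ := (hchar u).1 huJ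
  have ha0 : H.xs 0 ≤ a := le_min (H.xs0_le_lhit hpv) (H.xs0_le_lhit hqv)
  have hbl : b ≤ H.xs (Fin.last H.m) := max_le (H.rhit_le_xslast hpv) (H.rhit_le_xslast hqv)
  have hmin : ∀ v ∈ H.verts, v.2 < 0 → a ≤ v.1 → v.1 ≤ b → v.2 ≤ u.2 :=
    fun v h1 h2 h3 h4 => humin v ⟨(hchar v).2 ⟨h1, h3, h4⟩, h2⟩
  have hkey := H.key_bot huv hun ha0 hau hub hbl hmin
  have hla : H.lhit u ≤ a := H.lhit_le hau
    ((Set.prod_mono (Set.Icc_subset_Icc_right hub) Set.Subset.rfl).trans hkey)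
  have hrb : b ≤ H.rhit u := H.le_rhit hub
    ((Set.prod_mono (Set.Icc_subset_Icc_left hau) Set.Subset.rfl).trans hkey)
  refine ⟨huJ, fun w hw => ?_⟩
  obtain ⟨h1, h2, h3⟩ := (hchar w).1 hw
  exact H.mem_Iv.2 ⟨h1, le_trans hla h2, le_trans h3 hrb⟩

lemma dom_top {p q : ℝ × ℝ} (hpv : p ∈ H.verts) (hqv : q ∈ H.verts)
    (hpp : p ∈ H.Iv p) (hpq : p ∈ H.Iv q)
    (hJp : {v | v ∈ H.Iv p ∪ H.Iv q ∧ 0 < v.2}.Nonempty) :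
    leftmostLowest {v | v ∈ H.Iv p ∪ H.Iv q ∧ 0 < v.2} ∈ H.Iv p ∪ H.Iv q ∧
      H.Iv p ∪ H.Iv q ⊆ H.Iv (leftmostLowest {v | v ∈ H.Iv p ∪ H.Iv q ∧ 0 < v.2}) := by
  have hJv : H.Iv p ∪ H.Iv q ⊆ H.verts :=
    Set.union_subset (H.Iv_subset_verts p) (H.Iv_subset_verts q)
  have hJpf : {v | v ∈ H.Iv p ∪ H.Iv q ∧ 0 < v.2}.Finite :=
    H.verts_finite.subset (fun v hv => hJv hv.1)
  obtain ⟨huS, humin⟩ := leftmostLowest_spec_pos hJpf hJp (fun v hv => hv.2)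
  set u := leftmostLowest {v | v ∈ H.Iv p ∪ H.Iv q ∧ 0 < v.2} with hu
  obtain ⟨huJ, hup⟩ := huS
  set a := min (H.lhit p) (H.lhit q) with ha
  set b := max (H.rhit p) (H.rhit q) with hb
  have hp1 := H.mem_Iv.1 hpp
  have hp2 := H.mem_Iv.1 hpq
  have hchar : ∀ w, w ∈ H.Iv p ∪ H.Iv q ↔ (w ∈ H.verts ∧ a ≤ w.1 ∧ w.1 ≤ b) := by
    intro w
    constructor
    · rintro (hw | hw) <;> obtain ⟨h1, h2, h3⟩ := H.mem_Iv.1 hw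
      · exact ⟨h1, le_trans (min_le_left _ _) h2, le_trans h3 (le_max_left _ _)⟩
      · exact ⟨h1, le_trans (min_le_right _ _) h2, le_trans h3 (le_max_right _ _)⟩
    · rintro ⟨h1, h2, h3⟩
      rcases min_le_iff.1 h2 with h4 | h4
      · by_cases h5 : w.1 ≤ H.rhit p
        · exact Or.inl (H.mem_Iv.2 ⟨h1, h4, h5⟩)
        · push_neg at h5
          rcases le_max_iff.1 h3 with h6 | h6
          · exact absurd h6 (not_le.2 h5)
          · exact Or.inr (H.mem_Iv.2
              ⟨h1, le_trans hp2.2.1 (le_trans hp1.2.2 (le_of_lt h5)), h6⟩)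
      · by_cases h5 : w.1 ≤ H.rhit q
        · exact Or.inr (H.mem_Iv.2 ⟨h1, h4, h5⟩)
        · push_neg at h5
          rcases le_max_iff.1 h3 with h6 | h6
          · exact Or.inl (H.mem_Iv.2
              ⟨h1, le_trans hp1.2.1 (le_trans hp2.2.2 (le_of_lt h5)), h6⟩)
          · exact absurd h6 (not_le.2 h5)
  have huv : u ∈ H.verts := hJv huJ
  obtain ⟨-, hau, hub⟩ := (hchar u).1 huJ
  have ha0 : H.xs 0 ≤ a := le_min (H.xs0_le_lhit hpv) (H.xs0_le_lhit hqv)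
  have hbl : b ≤ H.xs (Fin.last H.m) := max_le (H.rhit_le_xslast hpv) (H.rhit_le_xslast hqv)
  have hmin : ∀ v ∈ H.verts, 0 < v.2 → a ≤ v.1 → v.1 ≤ b → u.2 ≤ v.2 :=
    fun v h1 h2 h3 h4 => humin v ⟨(hchar v).2 ⟨h1, h3, h4⟩, h2⟩
  have hkey := H.key_top huv hup ha0 hau hub hbl hmin
  have hla : H.lhit u ≤ a := H.lhit_le hau
    ((Set.prod_mono (Set.Icc_subset_Icc_right hub) Set.Subset.rfl).trans hkey)
  have hrb : b ≤ H.rhit u := H.le_rhit hub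
    ((Set.prod_mono (Set.Icc_subset_Icc_left hau) Set.Subset.rfl).trans hkey)
  refine ⟨huJ, fun w hw => ?_⟩
  obtain ⟨h1, h2, h3⟩ := (hchar w).1 hw
  exact H.mem_Iv.2 ⟨h1, le_trans hla h2, le_trans h3 hrb⟩

end DoubleHistogram

/-- In a double histogram, for any vertex `s` and any `k ≥ 0`,
`I^k(s) ⊆ I(bd^k(s)) ∩ I(td^k(s))`. -/
theorem Ik_inside_I_of_dominators
    (H : DoubleHistogram) (s : ↥H.verts) (k : ℕ) :
    H.Ipow (s : ℝ × ℝ) k ⊆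
      H.Iv (H.bdtd (s : ℝ × ℝ) k).1 ∩ H.Iv (H.bdtd (s : ℝ × ℝ) k).2 := by
  have hs : (s : ℝ × ℝ) ∈ H.verts := s.2
  suffices h : ((H.bdtd (s : ℝ × ℝ) k).1 ∈ H.Ipow (s : ℝ × ℝ) k ∧
      (H.bdtd (s : ℝ × ℝ) k).2 ∈ H.Ipow (s : ℝ × ℝ) k) ∧
      H.Ipow (s : ℝ × ℝ) k ⊆
        H.Iv (H.bdtd (s : ℝ × ℝ) k).1 ∩ H.Iv (H.bdtd (s : ℝ × ℝ) k).2 by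
    exact h.2
  induction k with
  | zero =>
    refine ⟨⟨rfl, rfl⟩, ?_⟩
    intro w hw
    have hw' : w = (s : ℝ × ℝ) := hw
    subst hw'
    exact ⟨H.self_mem_Iv hs, H.self_mem_Iv hs⟩
  | succ k ih =>
    obtain ⟨⟨hm1, hm2⟩, hsub⟩ := ih
    have hpIv := hsub hm1
    have hqIv := hsub hm2
    set p := (H.bdtd (s : ℝ × ℝ) k).1 with hp
    set q := (H.bdtd (s : ℝ × ℝ) k).2 with hq
    have hpv : p ∈ H.verts := (H.mem_Iv.1 hpIv.1).1
    have hqv : q ∈ H.verts := (H.mem_Iv.1 hqIv.1).1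
    have hpp : p ∈ H.Iv p := hpIv.1
    have hpq : p ∈ H.Iv q := hpIv.2
    have hpJ : p ∈ H.Iv p ∪ H.Iv q := Or.inl hpp
    set Jm := {v : ℝ × ℝ | v ∈ H.Iv p ∪ H.Iv q ∧ v.2 < 0} with hJmd
    set Jp := {v : ℝ × ℝ | v ∈ H.Iv p ∪ H.Iv q ∧ 0 < v.2} with hJpd
    have hstep : H.bdtd (s : ℝ × ℝ) (k + 1) =
        if Jm = ∅ then (leftmostLowest Jp, leftmostLowest Jp)
        else if Jp = ∅ then (leftmostLowest Jm, leftmostLowest Jm)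
        else (leftmostLowest Jm, leftmostLowest Jp) := rfl
    have hIpow : H.Ipow (s : ℝ × ℝ) (k + 1) = H.Iv p ∪ H.Iv q := rfl
    have hvert_sign : ∀ v ∈ H.Iv p ∪ H.Iv q, v ∈ Jm ∪ Jp := by
      intro v hv
      have hvvert : v ∈ H.verts := by
        rcases hv with hv | hv
        exacts [H.Iv_subset_verts _ hv, H.Iv_subset_verts _ hv]
      rcases H.verts_cases hvvert with ⟨i, h2, -⟩ | ⟨j, h2, -⟩
      · exact Or.inl ⟨hv, by rw [h2]; exact H.d_neg i⟩
      · exact Or.inr ⟨hv, by rw [h2]; exact H.h_pos j⟩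
    by_cases hJme : Jm = ∅
    · have hJpne : Jp.Nonempty := by
        rcases hvert_sign p hpJ with h | h
        · rw [hJme] at h
          exact absurd h (Set.notMem_empty _)
        · exact ⟨p, h⟩
      obtain ⟨huJ, husub⟩ := H.dom_top hpv hqv hpp hpq hJpne
      rw [hstep, if_pos hJme, hIpow]
      exact ⟨⟨huJ, huJ⟩, fun w hw => ⟨husub hw, husub hw⟩⟩
    · have hJmne : Jm.Nonempty := Set.nonempty_iff_ne_empty.2 hJme
      obtain ⟨hbJ, hbsub⟩ := H.dom_bot hpv hqv hpp hpq hJmne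
      by_cases hJpe : Jp = ∅
      · rw [hstep, if_neg hJme, if_pos hJpe, hIpow]
        exact ⟨⟨hbJ, hbJ⟩, fun w hw => ⟨hbsub hw, hbsub hw⟩⟩
      · have hJpne : Jp.Nonempty := Set.nonempty_iff_ne_empty.2 hJpe
        obtain ⟨htJ, htsub⟩ := H.dom_top hpv hqv hpp hpq hJpne
        rw [hstep, if_neg hJme, if_neg hJpe, hIpow]
        exact ⟨⟨hbJ, htJ⟩, fun w hw => ⟨hbsub hw, htsub hw⟩⟩
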